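/- Let g ∈ C^∞(closure D) with g ≤ 0 on E and g > 0 on ∂D, where D ⊂ ℝ² is a bounded domain and E ⊂ D a subdomain with positive distance to ∂D. Then there exists a sequence g_m ∈ C^∞(closure D) with: g_m < 0 on E, |∇g_m| + |g_m| > 0 on D, g_m > 0 on ∂D, and g_m → g uniformly on closure D. -/

import Mathlib

open MeasureTheory Filter Topology InnerProductSpace Set

noncomputable section
local notation "E2" => EuclideanSpace ℝ (Fin 2)

lemma key (K : Set (EuclideanSpace ℝ (Fin 2))) (hK : IsCompact K)
    (g : EuclideanSpace ℝ (Fin 2) → ℝ) (hg : ContDiff ℝ (⊤ : ℕ∞) g)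
    (R : ℝ) (hR0 : 0 ≤ R) (hR : ∀ x ∈ K, ‖x‖ ≤ R)
    (τ : ℝ) (hτ : 0 < τ) :
    ∃ h : EuclideanSpace ℝ (Fin 2) → ℝ, ContDiff ℝ (⊤ : ℕ∞) h ∧
      (∀ x ∈ K, h x < g x) ∧ (∀ x ∈ K, g x - 2*τ < h x) ∧
      (∀ x ∈ K, h x = 0 → fderiv ℝ h x ≠ 0) := by
  set F : E2 → E2 := fun x => (toDual ℝ E2).symm (fderiv ℝ g x) with hFdef
  have hF : ContDiff ℝ (⊤ : ℕ∞) F :=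
    (((toDual ℝ E2).symm.toContinuousLinearEquiv :
      _ ≃L[ℝ] E2).toContinuousLinearMap.contDiff).comp (hg.fderiv_right (by simp))
  set S := {x ∈ K | (fderiv ℝ F x).det = 0} with hSdef
  have hnull : volume (F '' S) = 0 := by
    apply addHaar_image_eq_zero_of_det_fderivWithin_eq_zero volume
      (f' := fun x => fderiv ℝ F x)
    · exact fun x _ => (hF.differentiable (by simp) x).hasFDerivAt.hasFDerivWithinAt
    · exact fun x hx => hx.2
  have hnull' : volume (-(F '' S)) = 0 := by rw [Measure.measure_neg]; exact hnull
  set ε := τ / (2 * (R + 1)) with hεdef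
  have hR1 : (0:ℝ) < R + 1 := by linarith
  have hε : 0 < ε := by positivity
  obtain ⟨a, haball, hanot⟩ : ∃ a ∈ Metric.ball (0:E2) ε, a ∉ -(F '' S) := by
    rw [← Set.not_subset]
    intro hsub
    have := (measure_mono hsub).trans_eq hnull'
    exact absurd (le_antisymm this zero_le) (Metric.measure_ball_pos volume 0 hε).ne'
  have hanot' : -a ∉ F '' S := by rwa [← Set.mem_neg]
  have ha : ‖a‖ < ε := by simpa using haball
  set C := K ∩ F ⁻¹' {-a} with hCdef
  have hCc : IsCompact C := hK.inter_right (isClosed_singleton.preimage hF.continuous)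
  have hiso : ∀ x ∈ C, ∃ U ∈ 𝓝 x, ∀ y ∈ C, y ∈ U → y = x := by
    intro x hx
    have hdet : (fderiv ℝ F x).det ≠ 0 := by
      intro h0
      exact hanot' ⟨x, ⟨hx.1, h0⟩, hx.2⟩
    set e := (fderiv ℝ F x).toContinuousLinearEquivOfDetNeZero hdet with he
    have hsf : HasStrictFDerivAt F (e : E2 →L[ℝ] E2) x := by
      rw [he, ContinuousLinearMap.coe_toContinuousLinearEquivOfDetNeZero]
      exact hF.hasStrictFDerivAt (by simp)
    have hev := hsf.eventually_left_inverse
    rw [Filter.eventually_iff_exists_mem] at hev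
    obtain ⟨U, hU, hUP⟩ := hev
    refine ⟨U, hU, fun y hy hyU => ?_⟩
    have h1 := hUP y hyU
    have h2 := hUP x (mem_of_mem_nhds hU)
    have hFy : F y = F x := by rw [hy.2, hx.2]
    rw [hFy, h2] at h1; exact h1.symm
  choose! U hU hUP using hiso
  obtain ⟨t, htC, htc⟩ := hCc.elim_nhds_subcover U hU
  have hCfin : C.Finite := by
    refine (t.finite_toSet).subset fun y hy => ?_
    obtain ⟨x, hxt, hyU⟩ := Set.mem_iUnion₂.1 (htc hy)
    rwa [hUP x (htC x hxt) y hy hyU]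
  have hvals : ((fun x : E2 => g x + (inner ℝ a x : ℝ)) '' C).Finite := hCfin.image _
  obtain ⟨δ, hδ⟩ := ((Set.Ioo_infinite (by linarith : τ/2 < τ)).diff hvals).nonempty
  obtain ⟨⟨hδ1, hδ2⟩, hδv⟩ := hδ
  have habs : ∀ x ∈ K, |(inner ℝ a x : ℝ)| < τ / 2 := by
    intro x hx
    calc |(inner ℝ a x : ℝ)| ≤ ‖a‖ * ‖x‖ := abs_real_inner_le_norm a x
      _ ≤ ‖a‖ * (R + 1) :=
          mul_le_mul_of_nonneg_left (by linarith [hR x hx]) (norm_nonneg a)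
      _ < ε * (R + 1) := mul_lt_mul_of_pos_right ha hR1
      _ = τ / 2 := by rw [hεdef]; field_simp
  have htoDual : (toDual ℝ E2) a = innerSL ℝ a := by ext y; simp
  refine ⟨fun x => g x + (inner ℝ a x : ℝ) - δ, ?_, ?_, ?_, ?_⟩
  · exact (hg.add (innerSL ℝ a).contDiff).sub contDiff_const
  · intro x hx
    have h1 := (abs_lt.1 (habs x hx)).2
    simp only []
    linarith
  · intro x hx
    have h1 := (abs_lt.1 (habs x hx)).1
    simp only []
    linarith
  · intro x hx h0 hf0
    have hder : HasFDerivAt (fun x : E2 => g x + (inner ℝ a x : ℝ) - δ)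
        (fderiv ℝ g x + innerSL ℝ a) x :=
      (((hg.differentiable (by simp) x).hasFDerivAt).add ((innerSL ℝ a).hasFDerivAt)).sub_const δ
    rw [hder.fderiv] at hf0
    have hfg : fderiv ℝ g x = -(innerSL ℝ a) := by
      rwa [add_eq_zero_iff_eq_neg] at hf0
    have hFx : F x = -a := by
      rw [hFdef]
      simp only [hfg, ← htoDual, ← map_neg]
      exact LinearIsometryEquiv.symm_apply_apply _ _
    have hxC : x ∈ C := ⟨hx, hFx⟩
    apply hδv
    refine ⟨x, hxC, ?_⟩
    show g x + (inner ℝ a x : ℝ) = δ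
    have h0' : g x + (inner ℝ a x : ℝ) - δ = 0 := h0
    linarith

/-- Every `g ∈ C^∞(closure D)` with `g ≤ 0` on `E` and
`g > 0` on `∂D` is the uniform limit on `closure D` of smooth functions
`g_m` with `g_m < 0` on `E`, `|∇g_m| + |g_m| > 0` on `D` and `g_m > 0` on `∂D`. -/
theorem stmt11 (D E : Set (EuclideanSpace ℝ (Fin 2)))
    (hDo : IsOpen D) (hDb : Bornology.IsBounded D) (hDc : IsConnected D)
    (hEo : IsOpen E) (hEc : IsConnected E) (hE : E ⊆ D)
    (r : ℝ) (hr : 0 < r)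
    (hsep : ∀ x ∈ closure E, ∀ y ∈ frontier D, r ≤ dist x y)
    (g : EuclideanSpace ℝ (Fin 2) → ℝ)
    (hg : ContDiff ℝ (⊤ : ℕ∞) g) (hgE : ∀ x ∈ E, g x ≤ 0)
    (hgb : ∀ x ∈ frontier D, 0 < g x) :
    ∃ gm : ℕ → EuclideanSpace ℝ (Fin 2) → ℝ,
      (∀ m, ContDiff ℝ (⊤ : ℕ∞) (gm m)) ∧
      (∀ m, ∀ x ∈ E, gm m x < 0) ∧
      (∀ m, ∀ x ∈ D, 0 < ‖fderiv ℝ (gm m) x‖ + |gm m x|) ∧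
      (∀ m, ∀ x ∈ frontier D, 0 < gm m x) ∧
      TendstoUniformlyOn gm g atTop (closure D) := by
  set K := closure D with hKdef
  have hKc : IsCompact K := hDb.isCompact_closure
  obtain ⟨R0, hR0b⟩ := isBounded_iff_forall_norm_le.1 hDb.closure
  set R := max R0 0 with hRdef
  have hR0 : 0 ≤ R := le_max_right _ _
  have hR : ∀ x ∈ K, ‖x‖ ≤ R := fun x hx => (hR0b x hx).trans (le_max_left _ _)
  -- a positive lower bound on g on the frontier
  obtain ⟨c, hc, hcb⟩ : ∃ c : ℝ, 0 < c ∧ ∀ x ∈ frontier D, c ≤ g x := by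
    rcases (frontier D).eq_empty_or_nonempty with hfe | hfn
    · exact ⟨1, one_pos, by rw [hfe]; simp⟩
    · have hfc : IsCompact (frontier D) :=
        (hDb.closure.subset (frontier_subset_closure)).isCompact_closure.of_isClosed_subset
          isClosed_frontier subset_closure
      obtain ⟨z, hz, hzmin⟩ := hfc.exists_isMinOn hfn (hg.continuous.continuousOn)
      exact ⟨g z, hgb z hz, fun x hx => hzmin hx⟩
  set τ : ℕ → ℝ := fun m => min (1 / (m + 1)) (c / 2) with hτdef
  have hτpos : ∀ m, 0 < τ m := fun m =>
    lt_min (by positivity) (by linarith)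
  have hkey := fun m => key K hKc g hg R hR0 hR (τ m) (hτpos m)
  choose h hsm hlt hgt hreg using hkey
  have hDK : D ⊆ K := subset_closure
  have hfK : frontier D ⊆ K := frontier_subset_closure
  refine ⟨h, hsm, ?_, ?_, ?_, ?_⟩
  · intro m x hx
    exact lt_of_lt_of_le (hlt m x (hDK (hE hx))) (hgE x hx)
  · intro m x hx
    rcases eq_or_ne (h m x) 0 with h0 | h0
    · have := hreg m x (hDK hx) h0
      have hpos : 0 < ‖fderiv ℝ (h m) x‖ := norm_pos_iff.2 this
      have : (0:ℝ) ≤ |h m x| := abs_nonneg _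
      linarith
    · have hpos : 0 < |h m x| := abs_pos.2 h0
      have : (0:ℝ) ≤ ‖fderiv ℝ (h m) x‖ := norm_nonneg _
      linarith
  · intro m x hx
    have h1 := hgt m x (hfK hx)
    have h2 := hcb x hx
    have h3 : τ m ≤ c / 2 := min_le_right _ _
    linarith
  · rw [Metric.tendstoUniformlyOn_iff]
    intro ε hε
    obtain ⟨N, hN⟩ := exists_nat_gt (2 / ε)
    filter_upwards [Filter.eventually_ge_atTop N] with m hm x hx
    have h1 := hlt m x hx
    have h2 := hgt m x hx
    have h3 : τ m ≤ 1 / (m + 1) := min_le_left _ _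
    rw [Real.dist_eq]
    have hm1 : (0:ℝ) < m + 1 := by positivity
    have hNm : (2:ℝ) / ε < m + 1 := by
      have : (N:ℝ) ≤ m := Nat.cast_le.2 hm
      linarith
    have h4 : 2 / (m + 1 : ℝ) < ε := by
      rw [div_lt_iff₀ hm1]
      rw [div_lt_iff₀ hε] at hNm
      linarith
    have h5 : 2 * τ m < ε := by
      have : 2 * τ m ≤ 2 / (m+1 : ℝ) := by
        rw [le_div_iff₀ hm1] at *
        nlinarith [h3, hm1]
      linarith
    rw [abs_lt]
    constructor <;> linarith
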